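/- Assume ℓ satisfies the boundedness condition of order 2 and the Lipschitz condition of order 2 (in the vector variable y ∈ ℝᵐ). Then the integral functional I : (L^∞(E))ᵐ → ℝ, I(y) = ∫_E ℓ(x, y(x)) dx, is twice continuously Fréchet differentiable, and for every M ≥ 0 there exist constants C_a, C_b > 0 such that for all y, ŷ ∈ (L^∞(E))ᵐ with ‖y‖_{L^∞} ≤ M and ‖ŷ‖_{L^∞} ≤ M and all z, ẑ ∈ (L^∞(E))ᵐ: |DI(y) z| ≤ C_a ‖z‖_{L²}, |D²I(y)(z, ẑ)| ≤ C_a ‖z‖_{L²} ‖ẑ‖_{L²}, |(DI(y) − DI(ŷ)) z| ≤ C_b ‖y − ŷ‖_{L^∞} ‖z‖_{L²}, and |(D²I(y) − D²I(ŷ))(z, ẑ)| ≤ C_b ‖y − ŷ‖_{L^∞} ‖z‖_{L²} ‖ẑ‖_{L²}. -/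

import Mathlib

open MeasureTheory Set Filter Topology ENNReal

noncomputable section
set_option linter.unusedSectionVars false
set_option maxHeartbeats 1000000

variable {E : Type*} [NormedAddCommGroup E] [NormedSpace ℝ E]

namespace IFhelp

lemma B_apply (f : E → ℝ) (v z w : E) :
    fderiv ℝ (fderiv ℝ f) v z w = iteratedFDeriv ℝ 2 f v ![z, w] := by
  rw [iteratedFDeriv_two_apply]; simp

lemma B_sub_norm_le (f : E → ℝ) (v₁ v₂ : E) :
    ‖fderiv ℝ (fderiv ℝ f) v₂ - fderiv ℝ (fderiv ℝ f) v₁‖ ≤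
      ‖iteratedFDeriv ℝ 2 f v₂ - iteratedFDeriv ℝ 2 f v₁‖ := by
  refine ContinuousLinearMap.opNorm_le_bound _ (norm_nonneg _) fun z => ?_
  refine ContinuousLinearMap.opNorm_le_bound _ (by positivity) fun w => ?_
  have h : (fderiv ℝ (fderiv ℝ f) v₂ - fderiv ℝ (fderiv ℝ f) v₁) z w =
      (iteratedFDeriv ℝ 2 f v₂ - iteratedFDeriv ℝ 2 f v₁) ![z, w] := by
    simp [B_apply]
  rw [h]
  calc ‖(iteratedFDeriv ℝ 2 f v₂ - iteratedFDeriv ℝ 2 f v₁) ![z, w]‖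
      ≤ ‖iteratedFDeriv ℝ 2 f v₂ - iteratedFDeriv ℝ 2 f v₁‖ * ∏ i, ‖(![z, w]) i‖ :=
        ContinuousMultilinearMap.le_opNorm _ _
    _ = ‖iteratedFDeriv ℝ 2 f v₂ - iteratedFDeriv ℝ 2 f v₁‖ * ‖z‖ * ‖w‖ := by
        rw [Fin.prod_univ_two]; simp [mul_assoc]

lemma B_norm_le (f : E → ℝ) (v : E) :
    ‖fderiv ℝ (fderiv ℝ f) v‖ ≤ ‖iteratedFDeriv ℝ 2 f v‖ := by
  refine ContinuousLinearMap.opNorm_le_bound _ (norm_nonneg _) fun z => ?_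
  refine ContinuousLinearMap.opNorm_le_bound _ (by positivity) fun w => ?_
  rw [B_apply]
  calc ‖iteratedFDeriv ℝ 2 f v ![z, w]‖
      ≤ ‖iteratedFDeriv ℝ 2 f v‖ * ∏ i, ‖(![z, w]) i‖ :=
        ContinuousMultilinearMap.le_opNorm _ _
    _ = ‖iteratedFDeriv ℝ 2 f v‖ * ‖z‖ * ‖w‖ := by
        rw [Fin.prod_univ_two]; simp [mul_assoc]

section Pointwise

variable {f : E → ℝ} {C K r : ℝ}

/-- pointwise hypotheses bundle -/
structure Pt (f : E → ℝ) (C K r : ℝ) : Prop where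
  smooth : ContDiff ℝ 2 f
  hfC : |f 0| ≤ C
  hC1 : ‖fderiv ℝ f 0‖ ≤ C
  hC2 : ‖iteratedFDeriv ℝ 2 f 0‖ ≤ C
  hK : ∀ v₁ v₂ : E, ‖v₁‖ ≤ r → ‖v₂‖ ≤ r →
    ‖iteratedFDeriv ℝ 2 f v₂ - iteratedFDeriv ℝ 2 f v₁‖ ≤ K * ‖v₂ - v₁‖
  hC : 0 ≤ C
  hK0 : 0 ≤ K
  hr : 0 ≤ r

lemma Pt.hasFDerivAt_f (h : Pt f C K r) (v : E) : HasFDerivAt f (fderiv ℝ f v) v :=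
  (h.smooth.differentiable (by norm_num) v).hasFDerivAt

lemma Pt.hasFDerivAt_g (h : Pt f C K r) (v : E) :
    HasFDerivAt (fderiv ℝ f) (fderiv ℝ (fderiv ℝ f) v) v := by
  have h1 : ContDiff ℝ 1 (fderiv ℝ f) := h.smooth.fderiv_right (by norm_num)
  exact ((h1.differentiable (by norm_num)) v).hasFDerivAt

lemma Pt.B_bound (h : Pt f C K r) {v : E} (hv : ‖v‖ ≤ r) :
    ‖fderiv ℝ (fderiv ℝ f) v‖ ≤ C + K * r := by
  calc ‖fderiv ℝ (fderiv ℝ f) v‖ ≤ ‖iteratedFDeriv ℝ 2 f v‖ := B_norm_le f v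
    _ ≤ ‖iteratedFDeriv ℝ 2 f 0‖ + ‖iteratedFDeriv ℝ 2 f v - iteratedFDeriv ℝ 2 f 0‖ := by
        have := norm_add_le (iteratedFDeriv ℝ 2 f 0)
          (iteratedFDeriv ℝ 2 f v - iteratedFDeriv ℝ 2 f 0)
        simpa using this
    _ ≤ C + K * ‖v - 0‖ := add_le_add h.hC2 (h.hK 0 v (by simpa using h.hr) hv)
    _ ≤ C + K * r := by
        simp only [sub_zero]
        exact add_le_add (le_refl C) (mul_le_mul_of_nonneg_left hv h.hK0)

lemma Pt.B_lip (h : Pt f C K r) {v₁ v₂ : E} (h1 : ‖v₁‖ ≤ r) (h2 : ‖v₂‖ ≤ r) :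
    ‖fderiv ℝ (fderiv ℝ f) v₂ - fderiv ℝ (fderiv ℝ f) v₁‖ ≤ K * ‖v₂ - v₁‖ :=
  (B_sub_norm_le f v₁ v₂).trans (h.hK v₁ v₂ h1 h2)

lemma Pt.g_lip (h : Pt f C K r) {v₁ v₂ : E} (h1 : ‖v₁‖ ≤ r) (h2 : ‖v₂‖ ≤ r) :
    ‖fderiv ℝ f v₂ - fderiv ℝ f v₁‖ ≤ (C + K * r) * ‖v₂ - v₁‖ := by
  have hconv : Convex ℝ (Metric.closedBall (0 : E) r) := convex_closedBall _ _
  refine hconv.norm_image_sub_le_of_norm_hasFDerivWithin_le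
    (fun u hu => ((h.hasFDerivAt_g u).hasFDerivWithinAt))
    (fun u hu => h.B_bound (by simpa [Metric.mem_closedBall, dist_eq_norm] using hu))
    (by simpa [Metric.mem_closedBall, dist_eq_norm] using h1)
    (by simpa [Metric.mem_closedBall, dist_eq_norm] using h2)

lemma Pt.g_bound (h : Pt f C K r) {v : E} (hv : ‖v‖ ≤ r) :
    ‖fderiv ℝ f v‖ ≤ C + (C + K * r) * r := by
  calc ‖fderiv ℝ f v‖ ≤ ‖fderiv ℝ f 0‖ + ‖fderiv ℝ f v - fderiv ℝ f 0‖ := by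
        have := norm_add_le (fderiv ℝ f 0) (fderiv ℝ f v - fderiv ℝ f 0)
        simpa using this
    _ ≤ C + (C + K * r) * ‖v - 0‖ := add_le_add h.hC1 (h.g_lip (by simpa using h.hr) hv)
    _ ≤ C + (C + K * r) * r := by
        simp only [sub_zero]
        refine add_le_add (le_refl C) (mul_le_mul_of_nonneg_left hv ?_)
        have h1 := h.hC; have h2 := h.hK0; have h3 := h.hr
        positivity

lemma Pt.f_lip (h : Pt f C K r) {v₁ v₂ : E} (h1 : ‖v₁‖ ≤ r) (h2 : ‖v₂‖ ≤ r) :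
    ‖f v₂ - f v₁‖ ≤ (C + (C + K * r) * r) * ‖v₂ - v₁‖ := by
  have hconv : Convex ℝ (Metric.closedBall (0 : E) r) := convex_closedBall _ _
  refine hconv.norm_image_sub_le_of_norm_hasFDerivWithin_le
    (fun u hu => ((h.hasFDerivAt_f u).hasFDerivWithinAt))
    (fun u hu => h.g_bound (by simpa [Metric.mem_closedBall, dist_eq_norm] using hu))
    (by simpa [Metric.mem_closedBall, dist_eq_norm] using h1)
    (by simpa [Metric.mem_closedBall, dist_eq_norm] using h2)

lemma segment_norm_le {v w u : E} (hu : u ∈ segment ℝ v (v + w)) :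
    ‖u - v‖ ≤ ‖w‖ := by
  obtain ⟨a, b, ha, hb, hab, rfl⟩ := hu
  have ha' : a = 1 - b := by linarith
  subst ha'
  have hkey : (1 - b) • v + b • (v + w) - v = b • w := by
    simp [smul_add, sub_smul, one_smul]; abel
  rw [hkey, norm_smul, Real.norm_eq_abs, abs_of_nonneg hb]
  have hb1 : b ≤ 1 := by linarith
  nlinarith [norm_nonneg w]


lemma segment_mem_ball {v w u : E} {r : ℝ} (hv : ‖v‖ ≤ r) (hvw : ‖v + w‖ ≤ r)
    (hu : u ∈ segment ℝ v (v + w)) : ‖u‖ ≤ r := by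
  have hs : segment ℝ v (v + w) ⊆ Metric.closedBall 0 r :=
    (convex_closedBall (0:E) r).segment_subset
      (by simpa [Metric.mem_closedBall, dist_eq_norm] using hv)
      (by simpa [Metric.mem_closedBall, dist_eq_norm] using hvw)
  simpa [Metric.mem_closedBall, dist_eq_norm] using hs hu

lemma Pt.taylor1 (h : Pt f C K r) {v w : E} (hv : ‖v‖ ≤ r) (hvw : ‖v + w‖ ≤ r) :
    ‖f (v + w) - f v - fderiv ℝ f v w‖ ≤ (C + K * r) * ‖w‖ * ‖w‖ := by
  set φ : E → ℝ := fun u => f u - fderiv ℝ f v u with hφ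
  have hconv : Convex ℝ (segment ℝ v (v + w)) := convex_segment _ _
  have hder : ∀ u ∈ segment ℝ v (v + w),
      HasFDerivWithinAt φ (fderiv ℝ f u - fderiv ℝ f v) (segment ℝ v (v + w)) u :=
    fun u _ => ((h.hasFDerivAt_f u).sub ((fderiv ℝ f v).hasFDerivAt)).hasFDerivWithinAt
  have hbd : ∀ u ∈ segment ℝ v (v + w),
      ‖fderiv ℝ f u - fderiv ℝ f v‖ ≤ (C + K * r) * ‖w‖ := by
    intro u hu
    calc ‖fderiv ℝ f u - fderiv ℝ f v‖ ≤ (C + K * r) * ‖u - v‖ :=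
          h.g_lip hv (segment_mem_ball hv hvw hu)
      _ ≤ (C + K * r) * ‖w‖ := by
          refine mul_le_mul_of_nonneg_left (segment_norm_le hu) ?_
          have h1 := h.hC; have h2 := h.hK0; have h3 := h.hr; positivity
  have hmv := hconv.norm_image_sub_le_of_norm_hasFDerivWithin_le hder hbd
    (left_mem_segment ℝ v (v + w)) (right_mem_segment ℝ v (v + w))
  have heq : φ (v + w) - φ v = f (v + w) - f v - fderiv ℝ f v w := by
    simp only [hφ, map_add]; ring
  rw [heq] at hmv
  calc ‖f (v + w) - f v - fderiv ℝ f v w‖ ≤ (C + K * r) * ‖w‖ * ‖v + w - v‖ := hmv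
    _ = (C + K * r) * ‖w‖ * ‖w‖ := by rw [add_sub_cancel_left]

lemma Pt.taylor2 (h : Pt f C K r) {v w : E} (hv : ‖v‖ ≤ r) (hvw : ‖v + w‖ ≤ r) :
    ‖fderiv ℝ f (v + w) - fderiv ℝ f v - fderiv ℝ (fderiv ℝ f) v w‖ ≤ K * ‖w‖ * ‖w‖ := by
  set φ : E → (E →L[ℝ] ℝ) := fun u => fderiv ℝ f u - fderiv ℝ (fderiv ℝ f) v u with hφ
  have hconv : Convex ℝ (segment ℝ v (v + w)) := convex_segment _ _
  have hder : ∀ u ∈ segment ℝ v (v + w),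
      HasFDerivWithinAt φ (fderiv ℝ (fderiv ℝ f) u - fderiv ℝ (fderiv ℝ f) v)
        (segment ℝ v (v + w)) u :=
    fun u _ => ((h.hasFDerivAt_g u).sub
      ((fderiv ℝ (fderiv ℝ f) v).hasFDerivAt)).hasFDerivWithinAt
  have hbd : ∀ u ∈ segment ℝ v (v + w),
      ‖fderiv ℝ (fderiv ℝ f) u - fderiv ℝ (fderiv ℝ f) v‖ ≤ K * ‖w‖ := by
    intro u hu
    calc ‖fderiv ℝ (fderiv ℝ f) u - fderiv ℝ (fderiv ℝ f) v‖ ≤ K * ‖u - v‖ :=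
          h.B_lip hv (segment_mem_ball hv hvw hu)
      _ ≤ K * ‖w‖ := mul_le_mul_of_nonneg_left (segment_norm_le hu) h.hK0
  have hmv := hconv.norm_image_sub_le_of_norm_hasFDerivWithin_le hder hbd
    (left_mem_segment ℝ v (v + w)) (right_mem_segment ℝ v (v + w))
  have heq : φ (v + w) - φ v =
      fderiv ℝ f (v + w) - fderiv ℝ f v - fderiv ℝ (fderiv ℝ f) v w := by
    simp only [hφ, map_add]; abel
  rw [heq] at hmv
  calc ‖fderiv ℝ f (v + w) - fderiv ℝ f v - fderiv ℝ (fderiv ℝ f) v w‖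
      ≤ K * ‖w‖ * ‖v + w - v‖ := hmv
    _ = K * ‖w‖ * ‖w‖ := by rw [add_sub_cancel_left]

end Pointwise



variable {α : Type*} [MeasurableSpace α] {μ : Measure α}
variable {V : Type*} [NormedAddCommGroup V] [NormedSpace ℝ V] [MeasurableSpace V]
  [BorelSpace V] [SecondCountableTopology V]

lemma hasFDerivAt_fderiv2 {f : V → ℝ} (hf : ContDiff ℝ 2 f) (v : V) :
    HasFDerivAt (fderiv ℝ f) (fderiv ℝ (fderiv ℝ f) v) v := by
  have h1 : ContDiff ℝ 1 (fderiv ℝ f) := hf.fderiv_right (by norm_num)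
  exact ((h1.differentiable (by norm_num)) v).hasFDerivAt

lemma hasDerivAt_comp_line {W : Type*} [NormedAddCommGroup W] [NormedSpace ℝ W]
    {f : V → W} {f' : V →L[ℝ] W} {v w : V} (hf : HasFDerivAt f f' v) :
    HasDerivAt (fun t : ℝ => f (v + t • w)) (f' w) 0 := by
  have h0 : v + (0 : ℝ) • w = v := by simp
  have hf' : HasFDerivAt f f' (v + (0 : ℝ) • w) := by rwa [h0]
  have hc : HasDerivAt (fun t : ℝ => v + t • w) w 0 := by
    simpa using (((hasDerivAt_id (0 : ℝ)).smul_const w).const_add v)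
  have := hf'.comp_hasDerivAt 0 hc
  exact this

lemma tendsto_slope_seq {h : ℝ → ℝ} {d : ℝ} (hd : HasDerivAt h d 0) :
    Tendsto (fun k : ℕ => (h (((k : ℝ) + 1)⁻¹) - h 0) / ((k : ℝ) + 1)⁻¹) atTop (𝓝 d) := by
  have hs := hasDerivAt_iff_tendsto_slope.mp hd
  have hseq : Tendsto (fun k : ℕ => ((k : ℝ) + 1)⁻¹) atTop (𝓝[≠] (0 : ℝ)) := by
    refine tendsto_nhdsWithin_of_tendsto_nhds_of_eventually_within _ ?_ ?_
    · simpa [one_div] using tendsto_one_div_add_atTop_nhds_zero_nat (𝕜 := ℝ)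
    · exact Eventually.of_forall fun k => by
        simp only [mem_compl_iff, mem_singleton_iff]
        positivity
  refine ((hs.comp hseq).congr fun k => ?_)
  simp [Function.comp, slope_def_field]

section Meas
variable {L : α → V → ℝ}

lemma aem_comp (hmeas : Measurable (Function.uncurry L)) {φ : α → V}
    (hφ : AEMeasurable φ μ) : AEMeasurable (fun x => L x (φ x)) μ := by
  refine ⟨fun x => L x (hφ.mk φ x),
    hmeas.comp (measurable_id.prodMk hφ.measurable_mk), ?_⟩
  filter_upwards [hφ.ae_eq_mk] with x hx
  rw [hx]

lemma aem_g (hmeas : Measurable (Function.uncurry L))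
    (hsmooth : ∀ᵐ x ∂μ, ContDiff ℝ 2 (L x)) {φ ψ : α → V}
    (hφ : AEMeasurable φ μ) (hψ : AEMeasurable ψ μ) :
    AEMeasurable (fun x => fderiv ℝ (L x) (φ x) (ψ x)) μ := by
  set t : ℕ → ℝ := fun k => ((k : ℝ) + 1)⁻¹ with ht
  have hF : ∀ k : ℕ,
      AEMeasurable (fun x => (L x (φ x + t k • ψ x) - L x (φ x)) / t k) μ := fun k =>
    ((aem_comp hmeas (hφ.add (hψ.const_smul (t k)))).sub (aem_comp hmeas hφ)).div_const _
  refine aemeasurable_of_tendsto_metrizable_ae atTop hF ?_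
  filter_upwards [hsmooth] with x hx
  have hd : HasDerivAt (fun s : ℝ => L x (φ x + s • ψ x))
      (fderiv ℝ (L x) (φ x) (ψ x)) 0 :=
    hasDerivAt_comp_line ((hx.differentiable (by norm_num) (φ x)).hasFDerivAt)
  have := tendsto_slope_seq hd
  simpa [ht] using this

lemma aem_B (hmeas : Measurable (Function.uncurry L))
    (hsmooth : ∀ᵐ x ∂μ, ContDiff ℝ 2 (L x)) {φ ψ χ : α → V}
    (hφ : AEMeasurable φ μ) (hψ : AEMeasurable ψ μ) (hχ : AEMeasurable χ μ) :
    AEMeasurable (fun x => fderiv ℝ (fderiv ℝ (L x)) (φ x) (ψ x) (χ x)) μ := by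
  set t : ℕ → ℝ := fun k => ((k : ℝ) + 1)⁻¹ with ht
  have hF : ∀ k : ℕ,
      AEMeasurable (fun x =>
        (fderiv ℝ (L x) (φ x + t k • ψ x) (χ x) - fderiv ℝ (L x) (φ x) (χ x)) / t k) μ :=
    fun k => ((aem_g hmeas hsmooth (hφ.add (hψ.const_smul (t k))) hχ).sub
      (aem_g hmeas hsmooth hφ hχ)).div_const _
  refine aemeasurable_of_tendsto_metrizable_ae atTop hF ?_
  filter_upwards [hsmooth] with x hx
  have hA : HasFDerivAt (fun u : V => fderiv ℝ (L x) u (χ x))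
      ((ContinuousLinearMap.apply ℝ ℝ (χ x)).comp (fderiv ℝ (fderiv ℝ (L x)) (φ x)))
      (φ x) :=
    (ContinuousLinearMap.apply ℝ ℝ (χ x)).hasFDerivAt.comp _ (hasFDerivAt_fderiv2 hx (φ x))
  have hd := hasDerivAt_comp_line (w := ψ x) hA
  have := tendsto_slope_seq hd
  simpa [ht] using this

end Meas

lemma ae_norm_le_norm (f : Lp V ⊤ μ) : ∀ᵐ x ∂μ, ‖f x‖ ≤ ‖f‖ := by
  have h1 := enorm_ae_le_eLpNormEssSup (⇑f) μ
  have h2 : eLpNorm (⇑f) ⊤ μ ≠ ∞ := Lp.eLpNorm_ne_top f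
  rw [eLpNorm_exponent_top] at h2
  filter_upwards [h1] with x hx
  rw [Lp.norm_def, eLpNorm_exponent_top]
  calc ‖f x‖ = ((‖f x‖₊ : ℝ≥0∞)).toReal := by simp
    _ ≤ (eLpNormEssSup (⇑f) μ).toReal := ENNReal.toReal_mono h2 hx

lemma eLpNorm_two_ne_top [IsFiniteMeasure μ] (f : Lp V ⊤ μ) : eLpNorm (⇑f) 2 μ ≠ ∞ := by
  have h := eLpNorm_le_eLpNorm_mul_rpow_measure_univ (p := 2) (q := ⊤) le_top
    (Lp.aestronglyMeasurable f)
  refine ne_top_of_le_ne_top ?_ h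
  refine ENNReal.mul_ne_top (Lp.eLpNorm_ne_top f)
    (ENNReal.rpow_ne_top_of_nonneg ?_ (measure_ne_top μ _))
  simp

lemma integral_mul_le_eLpNorm_two {f g : α → ℝ} (hf : AEMeasurable f μ) (hg : AEMeasurable g μ)
    (hf0 : 0 ≤ᵐ[μ] f) (hg0 : 0 ≤ᵐ[μ] g)
    (hf2 : eLpNorm f 2 μ ≠ ⊤) (hg2 : eLpNorm g 2 μ ≠ ⊤) :
    ∫ x, f x * g x ∂μ ≤ (eLpNorm f 2 μ).toReal * (eLpNorm g 2 μ).toReal := by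
  by_cases hi : Integrable (fun x => f x * g x) μ
  · rw [integral_eq_lintegral_of_nonneg_ae
      (hf0.mp (hg0.mono fun x h2 h1 => mul_nonneg h1 h2)) hi.aestronglyMeasurable]
    have heq : ∫⁻ x, ENNReal.ofReal (f x * g x) ∂μ =
        ∫⁻ x, ENNReal.ofReal (f x) * ENNReal.ofReal (g x) ∂μ := by
      refine lintegral_congr_ae ?_
      filter_upwards [hf0] with x hx
      rw [ENNReal.ofReal_mul hx]
    have hH := ENNReal.lintegral_mul_le_Lp_mul_Lq μ (p := 2) (q := 2)
      ⟨by norm_num, by norm_num, by norm_num⟩ hf.ennreal_ofReal hg.ennreal_ofReal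
    have hsn : ∀ (h : α → ℝ), 0 ≤ᵐ[μ] h →
        (∫⁻ x, ENNReal.ofReal (h x) ^ (2 : ℝ) ∂μ) ^ ((1 : ℝ) / 2) = eLpNorm h 2 μ := by
      intro h h0
      rw [eLpNorm_eq_lintegral_rpow_enorm_toReal (by norm_num) (by norm_num)]
      have e1 : ∀ᵐ x ∂μ, ENNReal.ofReal (h x) ^ (2 : ℝ) =
          ‖h x‖ₑ ^ ((2 : ℝ≥0∞).toReal) := by
        filter_upwards [h0] with x hx
        rw [← ofReal_norm, Real.norm_of_nonneg hx]
        norm_num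
      rw [lintegral_congr_ae e1]
      norm_num
  -- combine
    have hle : ∫⁻ x, ENNReal.ofReal (f x * g x) ∂μ ≤ eLpNorm f 2 μ * eLpNorm g 2 μ := by
      rw [heq, ← hsn f hf0, ← hsn g hg0]
      exact hH
    calc (∫⁻ x, ENNReal.ofReal (f x * g x) ∂μ).toReal
        ≤ (eLpNorm f 2 μ * eLpNorm g 2 μ).toReal :=
          ENNReal.toReal_mono (ENNReal.mul_ne_top hf2 hg2) hle
      _ = (eLpNorm f 2 μ).toReal * (eLpNorm g 2 μ).toReal := ENNReal.toReal_mul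
  · rw [integral_undef hi]
    exact mul_nonneg ENNReal.toReal_nonneg ENNReal.toReal_nonneg

lemma integral_norm_mul_norm_le [IsFiniteMeasure μ] (z w : Lp V ⊤ μ) :
    ∫ x, ‖z x‖ * ‖w x‖ ∂μ ≤ (eLpNorm (⇑z) 2 μ).toReal * (eLpNorm (⇑w) 2 μ).toReal := by
  have h := integral_mul_le_eLpNorm_two (μ := μ)
    (f := fun x => ‖z x‖) (g := fun x => ‖w x‖)
    (Lp.aestronglyMeasurable z).norm.aemeasurable (Lp.aestronglyMeasurable w).norm.aemeasurable
    (Eventually.of_forall fun x => norm_nonneg _) (Eventually.of_forall fun x => norm_nonneg _)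
    (by rw [eLpNorm_norm]; exact eLpNorm_two_ne_top z)
    (by rw [eLpNorm_norm]; exact eLpNorm_two_ne_top w)
  simpa [eLpNorm_norm] using h

lemma integral_norm_le [IsFiniteMeasure μ] (z : Lp V ⊤ μ) :
    ∫ x, ‖z x‖ ∂μ ≤ (μ univ).toReal ^ ((1 : ℝ) / 2) * (eLpNorm (⇑z) 2 μ).toReal := by
  rcases eq_or_ne μ 0 with rfl | hμ0
  · simp
  have h := integral_mul_le_eLpNorm_two (μ := μ)
    (f := fun x => ‖z x‖) (g := fun _ => (1 : ℝ))
    (Lp.aestronglyMeasurable z).norm.aemeasurable aemeasurable_const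
    (Eventually.of_forall fun x => norm_nonneg _) (Eventually.of_forall fun x => by norm_num)
    (by rw [eLpNorm_norm]; exact eLpNorm_two_ne_top z)
    (by
      rw [eLpNorm_const (1 : ℝ) (by norm_num) hμ0]
      exact ENNReal.mul_ne_top (by simp)
        (ENNReal.rpow_ne_top_of_nonneg (by norm_num) (measure_ne_top μ _)))
  rw [eLpNorm_norm] at h
  have hc : (eLpNorm (fun _ : α => (1 : ℝ)) 2 μ).toReal = (μ univ).toReal ^ ((1 : ℝ) / 2) := by
    rw [eLpNorm_const (1 : ℝ) (by norm_num) hμ0]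
    simp [ENNReal.toReal_rpow]
  rw [hc] at h
  calc ∫ x, ‖z x‖ ∂μ = ∫ x, ‖z x‖ * 1 ∂μ := by simp
    _ ≤ (eLpNorm (⇑z) 2 μ).toReal * ((μ univ).toReal ^ ((1 : ℝ) / 2)) := h
    _ = (μ univ).toReal ^ ((1 : ℝ) / 2) * (eLpNorm (⇑z) 2 μ).toReal := mul_comm _ _

lemma abs_integral_le_const [IsFiniteMeasure μ] {u : α → ℝ} {c : ℝ}
    (hb : ∀ᵐ x ∂μ, |u x| ≤ c) :
    |∫ x, u x ∂μ| ≤ c * (μ univ).toReal := by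
  have h := norm_integral_le_of_norm_le (μ := μ) (integrable_const c)
    (by filter_upwards [hb] with x hx; rwa [Real.norm_eq_abs])
  rw [Real.norm_eq_abs] at h
  rw [integral_const, smul_eq_mul, measureReal_def, mul_comm] at h; exact h

lemma integrable_of_ae_bound [IsFiniteMeasure μ] {u : α → ℝ} {c : ℝ}
    (hu : AEStronglyMeasurable u μ) (hb : ∀ᵐ x ∂μ, |u x| ≤ c) : Integrable u μ :=
  Integrable.mono' (integrable_const c) hu (by simpa using hb)

lemma abs_integral_le_CS1 [IsFiniteMeasure μ] {u : α → ℝ} {c : ℝ} (hc : 0 ≤ c)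
    (z : Lp V ⊤ μ) (hu : AEStronglyMeasurable u μ) (hb : ∀ᵐ x ∂μ, |u x| ≤ c * ‖z x‖) :
    |∫ x, u x ∂μ| ≤ c * (μ univ).toReal ^ ((1 : ℝ) / 2) * (eLpNorm (⇑z) 2 μ).toReal := by
  have hzi : Integrable (fun x => ‖z x‖) μ := by
    refine integrable_of_ae_bound (c := ‖z‖) (Lp.aestronglyMeasurable z).norm ?_
    filter_upwards [ae_norm_le_norm z] with x hx
    rwa [abs_of_nonneg (norm_nonneg _)]
  have hui : Integrable u μ := by
    refine integrable_of_ae_bound (c := c * ‖z‖) hu ?_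
    filter_upwards [hb, ae_norm_le_norm z] with x h1 h2
    exact h1.trans (mul_le_mul_of_nonneg_left h2 hc)
  calc |∫ x, u x ∂μ| ≤ ∫ x, |u x| ∂μ := by
        simpa using norm_integral_le_integral_norm u
    _ ≤ ∫ x, c * ‖z x‖ ∂μ := integral_mono_ae hui.abs (hzi.const_mul c) hb
    _ = c * ∫ x, ‖z x‖ ∂μ := integral_const_mul c _
    _ ≤ c * ((μ univ).toReal ^ ((1 : ℝ) / 2) * (eLpNorm (⇑z) 2 μ).toReal) :=
        mul_le_mul_of_nonneg_left (integral_norm_le z) hc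
    _ = c * (μ univ).toReal ^ ((1 : ℝ) / 2) * (eLpNorm (⇑z) 2 μ).toReal := by ring

lemma abs_integral_le_CS2 [IsFiniteMeasure μ] {u : α → ℝ} {c : ℝ} (hc : 0 ≤ c)
    (z w : Lp V ⊤ μ) (hu : AEStronglyMeasurable u μ)
    (hb : ∀ᵐ x ∂μ, |u x| ≤ c * (‖z x‖ * ‖w x‖)) :
    |∫ x, u x ∂μ| ≤ c * (eLpNorm (⇑z) 2 μ).toReal * (eLpNorm (⇑w) 2 μ).toReal := by
  have hzi : Integrable (fun x => ‖z x‖ * ‖w x‖) μ := by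
    refine integrable_of_ae_bound (c := ‖z‖ * ‖w‖) ((Lp.aestronglyMeasurable z).norm.mul
      (Lp.aestronglyMeasurable w).norm) ?_
    filter_upwards [ae_norm_le_norm z, ae_norm_le_norm w] with x h1 h2
    rw [abs_of_nonneg (mul_nonneg (norm_nonneg _) (norm_nonneg _))]
    exact mul_le_mul h1 h2 (norm_nonneg _) (norm_nonneg z)
  have hui : Integrable u μ := by
    refine integrable_of_ae_bound (c := c * (‖z‖ * ‖w‖)) hu ?_
    filter_upwards [hb, ae_norm_le_norm z, ae_norm_le_norm w] with x h1 h2 h3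
    refine h1.trans (mul_le_mul_of_nonneg_left ?_ hc)
    exact mul_le_mul h2 h3 (norm_nonneg _) (norm_nonneg z)
  calc |∫ x, u x ∂μ| ≤ ∫ x, |u x| ∂μ := by
        simpa using norm_integral_le_integral_norm u
    _ ≤ ∫ x, c * (‖z x‖ * ‖w x‖) ∂μ := integral_mono_ae hui.abs (hzi.const_mul c) hb
    _ = c * ∫ x, ‖z x‖ * ‖w x‖ ∂μ := integral_const_mul c _
    _ ≤ c * ((eLpNorm (⇑z) 2 μ).toReal * (eLpNorm (⇑w) 2 μ).toReal) :=
        mul_le_mul_of_nonneg_left (integral_norm_mul_norm_le z w) hc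
    _ = c * (eLpNorm (⇑z) 2 μ).toReal * (eLpNorm (⇑w) 2 μ).toReal := by ring


section Main

variable {α : Type*} [MeasurableSpace α] {μ : Measure α} [IsFiniteMeasure μ]
variable {V : Type*} [NormedAddCommGroup V] [NormedSpace ℝ V] [MeasurableSpace V]
  [BorelSpace V] [SecondCountableTopology V]
variable {L : α → V → ℝ} {C : ℝ} {K : ℝ → ℝ}

/-- bound for `‖B‖` and Lipschitz constant of `g` on the ball of radius `r`. -/
def CB (C : ℝ) (K : ℝ → ℝ) (r : ℝ) : ℝ := C + K r * r

/-- bound for `‖g‖` on the ball of radius `r`. -/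
def Cg (C : ℝ) (K : ℝ → ℝ) (r : ℝ) : ℝ := C + (C + K r * r) * r

structure Setup (μ : Measure α) (L : α → V → ℝ) (C : ℝ) (K : ℝ → ℝ) : Prop where
  meas : Measurable (Function.uncurry L)
  good : ∀ r : ℝ, 0 ≤ r → ∀ᵐ x ∂μ, Pt (L x) C (K r) r
  hC : 0 ≤ C
  hK : ∀ r, 0 ≤ r → 0 ≤ K r

namespace Setup

variable (hS : Setup μ L C K)
include hS

lemma CB_nonneg {r : ℝ} (hr : 0 ≤ r) : 0 ≤ CB C K r := by
  have := hS.hC; have := hS.hK r hr; unfold CB; positivity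

lemma Cg_nonneg {r : ℝ} (hr : 0 ≤ r) : 0 ≤ Cg C K r := by
  have := hS.hC; have := hS.hK r hr; unfold Cg; positivity

lemma smooth : ∀ᵐ x ∂μ, ContDiff ℝ 2 (L x) :=
  (hS.good 0 le_rfl).mono fun _ h => h.smooth

lemma aesm_L (y : Lp V ⊤ μ) : AEStronglyMeasurable (fun x => L x (y x)) μ :=
  (aem_comp hS.meas (Lp.aestronglyMeasurable y).aemeasurable).aestronglyMeasurable

lemma aesm_g (y z : Lp V ⊤ μ) :
    AEStronglyMeasurable (fun x => fderiv ℝ (L x) (y x) (z x)) μ :=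
  (aem_g hS.meas hS.smooth (Lp.aestronglyMeasurable y).aemeasurable
    (Lp.aestronglyMeasurable z).aemeasurable).aestronglyMeasurable

lemma aesm_B (y z w : Lp V ⊤ μ) :
    AEStronglyMeasurable (fun x => fderiv ℝ (fderiv ℝ (L x)) (y x) (z x) (w x)) μ :=
  (aem_B hS.meas hS.smooth (Lp.aestronglyMeasurable y).aemeasurable
    (Lp.aestronglyMeasurable z).aemeasurable
    (Lp.aestronglyMeasurable w).aemeasurable).aestronglyMeasurable

lemma ae_g_bound (y z : Lp V ⊤ μ) {r : ℝ} (hy : ‖y‖ ≤ r) :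
    ∀ᵐ x ∂μ, |fderiv ℝ (L x) (y x) (z x)| ≤ Cg C K r * ‖z x‖ := by
  have hr : 0 ≤ r := (norm_nonneg y).trans hy
  filter_upwards [hS.good r hr, ae_norm_le_norm y] with x hpt hyx
  calc |fderiv ℝ (L x) (y x) (z x)| ≤ ‖fderiv ℝ (L x) (y x)‖ * ‖z x‖ :=
        (fderiv ℝ (L x) (y x)).le_opNorm (z x)
    _ ≤ Cg C K r * ‖z x‖ :=
        mul_le_mul_of_nonneg_right (hpt.g_bound (hyx.trans hy)) (norm_nonneg _)

lemma ae_B_bound (y z w : Lp V ⊤ μ) {r : ℝ} (hy : ‖y‖ ≤ r) :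
    ∀ᵐ x ∂μ, |fderiv ℝ (fderiv ℝ (L x)) (y x) (z x) (w x)| ≤ CB C K r * (‖z x‖ * ‖w x‖) := by
  have hr : 0 ≤ r := (norm_nonneg y).trans hy
  filter_upwards [hS.good r hr, ae_norm_le_norm y] with x hpt hyx
  calc |fderiv ℝ (fderiv ℝ (L x)) (y x) (z x) (w x)|
      ≤ ‖fderiv ℝ (fderiv ℝ (L x)) (y x) (z x)‖ * ‖w x‖ :=
        ((fderiv ℝ (fderiv ℝ (L x)) (y x)) (z x)).le_opNorm (w x)
    _ ≤ ‖fderiv ℝ (fderiv ℝ (L x)) (y x)‖ * ‖z x‖ * ‖w x‖ :=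
        mul_le_mul_of_nonneg_right
          ((fderiv ℝ (fderiv ℝ (L x)) (y x)).le_opNorm (z x)) (norm_nonneg _)
    _ ≤ CB C K r * (‖z x‖ * ‖w x‖) := by
        have h1 := hpt.B_bound (hyx.trans hy)
        have h2 : 0 ≤ ‖z x‖ := norm_nonneg _
        have h3 : 0 ≤ ‖w x‖ := norm_nonneg _
        rw [mul_assoc]
        refine mul_le_mul_of_nonneg_right ?_ (by positivity)
        exact h1

lemma integrable_g (y z : Lp V ⊤ μ) : Integrable (fun x => fderiv ℝ (L x) (y x) (z x)) μ := by
  refine integrable_of_ae_bound (c := Cg C K ‖y‖ * ‖z‖) (hS.aesm_g y z) ?_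
  filter_upwards [hS.ae_g_bound y z le_rfl, ae_norm_le_norm z] with x h1 h2
  exact h1.trans (mul_le_mul_of_nonneg_left h2 (hS.Cg_nonneg (norm_nonneg y)))

lemma integrable_B (y z w : Lp V ⊤ μ) :
    Integrable (fun x => fderiv ℝ (fderiv ℝ (L x)) (y x) (z x) (w x)) μ := by
  refine integrable_of_ae_bound (c := CB C K ‖y‖ * (‖z‖ * ‖w‖)) (hS.aesm_B y z w) ?_
  filter_upwards [hS.ae_B_bound y z w le_rfl, ae_norm_le_norm z, ae_norm_le_norm w]
    with x h1 h2 h3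
  refine h1.trans (mul_le_mul_of_nonneg_left ?_ (hS.CB_nonneg (norm_nonneg y)))
  exact mul_le_mul h2 h3 (norm_nonneg _) (norm_nonneg z)

lemma integrable_L (y : Lp V ⊤ μ) : Integrable (fun x => L x (y x)) μ := by
  refine integrable_of_ae_bound (c := C + Cg C K ‖y‖ * ‖y‖) (hS.aesm_L y) ?_
  filter_upwards [hS.good ‖y‖ (norm_nonneg y), ae_norm_le_norm y] with x hpt hyx
  calc |L x (y x)| ≤ |L x 0| + ‖L x (y x) - L x 0‖ := by
        rw [Real.norm_eq_abs]
        have := abs_add_le (L x 0) (L x (y x) - L x 0)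
        simpa using this
    _ ≤ C + Cg C K ‖y‖ * ‖y x - 0‖ := by
        refine add_le_add hpt.hfC ?_
        simpa [Cg] using hpt.f_lip (v₁ := 0) (by simp) hyx
    _ ≤ C + Cg C K ‖y‖ * ‖y‖ := by
        simp only [sub_zero]
        exact add_le_add (le_refl C)
          (mul_le_mul_of_nonneg_left hyx (hS.Cg_nonneg (norm_nonneg y)))

end Setup

/-- first candidate derivative as a continuous linear map -/
def D1 (hS : Setup μ L C K) (y : Lp V ⊤ μ) : Lp V ⊤ μ →L[ℝ] ℝ :=
  LinearMap.mkContinuous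
    { toFun := fun z => ∫ x, fderiv ℝ (L x) (y x) (z x) ∂μ
      map_add' := fun z w => by
        rw [← integral_add (hS.integrable_g y z) (hS.integrable_g y w)]
        refine integral_congr_ae ?_
        filter_upwards [Lp.coeFn_add z w] with x hx
        rw [hx]
        simp
      map_smul' := fun c z => by
        simp only [RingHom.id_apply]
        rw [← integral_smul]
        refine integral_congr_ae ?_
        filter_upwards [Lp.coeFn_smul c z] with x hx
        rw [hx]
        simp }
    (Cg C K ‖y‖ * (μ univ).toReal)
    (by
      intro z
      simp only [LinearMap.coe_mk, AddHom.coe_mk, Real.norm_eq_abs]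
      have hb : ∀ᵐ x ∂μ, |fderiv ℝ (L x) (y x) (z x)| ≤ Cg C K ‖y‖ * ‖z‖ := by
        filter_upwards [hS.ae_g_bound y z le_rfl, ae_norm_le_norm z] with x h1 h2
        exact h1.trans (mul_le_mul_of_nonneg_left h2 (hS.Cg_nonneg (norm_nonneg y)))
      calc |∫ x, fderiv ℝ (L x) (y x) (z x) ∂μ| ≤ Cg C K ‖y‖ * ‖z‖ * (μ univ).toReal :=
            abs_integral_le_const hb
        _ = Cg C K ‖y‖ * (μ univ).toReal * ‖z‖ := by ring)

lemma D1_norm_le (hS : Setup μ L C K) (y : Lp V ⊤ μ) :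
    ‖D1 hS y‖ ≤ Cg C K ‖y‖ * (μ univ).toReal := by
  unfold D1
  exact LinearMap.mkContinuous_norm_le _
    (by have h1 := hS.Cg_nonneg (norm_nonneg y); positivity) _

lemma D1_apply (hS : Setup μ L C K) (y z : Lp V ⊤ μ) :
    D1 hS y z = ∫ x, fderiv ℝ (L x) (y x) (z x) ∂μ := rfl

/-- second candidate derivative, inner map -/
def D2i (hS : Setup μ L C K) (y z : Lp V ⊤ μ) : Lp V ⊤ μ →L[ℝ] ℝ :=
  LinearMap.mkContinuous
    { toFun := fun w => ∫ x, fderiv ℝ (fderiv ℝ (L x)) (y x) (z x) (w x) ∂μ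
      map_add' := fun w w' => by
        rw [← integral_add (hS.integrable_B y z w) (hS.integrable_B y z w')]
        refine integral_congr_ae ?_
        filter_upwards [Lp.coeFn_add w w'] with x hx
        rw [hx]
        simp
      map_smul' := fun c w => by
        simp only [RingHom.id_apply]
        rw [← integral_smul]
        refine integral_congr_ae ?_
        filter_upwards [Lp.coeFn_smul c w] with x hx
        rw [hx]
        simp }
    (CB C K ‖y‖ * (μ univ).toReal * ‖z‖)
    (by
      intro w
      simp only [LinearMap.coe_mk, AddHom.coe_mk, Real.norm_eq_abs]
      have hb : ∀ᵐ x ∂μ, |fderiv ℝ (fderiv ℝ (L x)) (y x) (z x) (w x)| ≤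
          CB C K ‖y‖ * (‖z‖ * ‖w‖) := by
        filter_upwards [hS.ae_B_bound y z w le_rfl, ae_norm_le_norm z, ae_norm_le_norm w]
          with x h1 h2 h3
        refine h1.trans (mul_le_mul_of_nonneg_left ?_ (hS.CB_nonneg (norm_nonneg y)))
        exact mul_le_mul h2 h3 (norm_nonneg _) (norm_nonneg z)
      calc |∫ x, fderiv ℝ (fderiv ℝ (L x)) (y x) (z x) (w x) ∂μ|
          ≤ CB C K ‖y‖ * (‖z‖ * ‖w‖) * (μ univ).toReal := abs_integral_le_const hb
        _ = CB C K ‖y‖ * (μ univ).toReal * ‖z‖ * ‖w‖ := by ring)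

lemma D2i_apply (hS : Setup μ L C K) (y z w : Lp V ⊤ μ) :
    D2i hS y z w = ∫ x, fderiv ℝ (fderiv ℝ (L x)) (y x) (z x) (w x) ∂μ := rfl

lemma D2i_norm_le (hS : Setup μ L C K) (y z : Lp V ⊤ μ) :
    ‖D2i hS y z‖ ≤ CB C K ‖y‖ * (μ univ).toReal * ‖z‖ := by
  unfold D2i
  exact LinearMap.mkContinuous_norm_le _
    (by have h1 := hS.CB_nonneg (norm_nonneg y); positivity) _

/-- second candidate derivative -/
def D2 (hS : Setup μ L C K) (y : Lp V ⊤ μ) : Lp V ⊤ μ →L[ℝ] Lp V ⊤ μ →L[ℝ] ℝ :=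
  LinearMap.mkContinuous
    { toFun := fun z => D2i hS y z
      map_add' := fun z z' => by
        ext w
        simp only [D2i, ContinuousLinearMap.add_apply, LinearMap.mkContinuous_apply,
          LinearMap.coe_mk, AddHom.coe_mk]
        rw [← integral_add (hS.integrable_B y z w) (hS.integrable_B y z' w)]
        refine integral_congr_ae ?_
        filter_upwards [Lp.coeFn_add z z'] with x hx
        rw [hx]
        simp
      map_smul' := fun c z => by
        ext w
        simp only [D2i, RingHom.id_apply, ContinuousLinearMap.coe_smul', Pi.smul_apply,
          LinearMap.mkContinuous_apply, LinearMap.coe_mk, AddHom.coe_mk]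
        rw [← integral_smul]
        refine integral_congr_ae ?_
        filter_upwards [Lp.coeFn_smul c z] with x hx
        rw [hx]
        simp }
    (CB C K ‖y‖ * (μ univ).toReal)
    (fun z => D2i_norm_le hS y z)


lemma D2_apply (hS : Setup μ L C K) (y z w : Lp V ⊤ μ) :
    D2 hS y z w = ∫ x, fderiv ℝ (fderiv ℝ (L x)) (y x) (z x) (w x) ∂μ := rfl

lemma D2_norm_le (hS : Setup μ L C K) (y : Lp V ⊤ μ) :
    ‖D2 hS y‖ ≤ CB C K ‖y‖ * (μ univ).toReal := by
  unfold D2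
  exact LinearMap.mkContinuous_norm_le _
    (by have h1 := hS.CB_nonneg (norm_nonneg y); positivity) _

end Main


section Main2

variable {α : Type*} [MeasurableSpace α] {μ : Measure α} [IsFiniteMeasure μ]
variable {V : Type*} [NormedAddCommGroup V] [NormedSpace ℝ V] [MeasurableSpace V]
  [BorelSpace V] [SecondCountableTopology V]
variable {L : α → V → ℝ} {C : ℝ} {K : ℝ → ℝ}

namespace Setup

variable (hS : Setup μ L C K)
include hS

lemma ae_sub_norm_le (y yh : Lp V ⊤ μ) : ∀ᵐ x ∂μ, ‖y x - yh x‖ ≤ ‖y - yh‖ := by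
  filter_upwards [ae_norm_le_norm (y - yh), Lp.coeFn_sub y yh] with x h1 h2
  have h3 : (⇑(y - yh) : α → V) x = y x - yh x := by rw [h2, Pi.sub_apply]
  rw [← h3]
  exact h1

lemma taylor1_integral (y h : Lp V ⊤ μ) {r : ℝ} (hr : ‖y‖ + ‖h‖ ≤ r) :
    |(∫ x, L x ((y + h) x) ∂μ) - (∫ x, L x (y x) ∂μ) - D1 hS y h| ≤
      CB C K r * (μ univ).toReal * (‖h‖ * ‖h‖) := by
  have hr0 : 0 ≤ r := le_trans (by positivity) hr
  have hint1 : Integrable (fun x => L x (y x + h x)) μ := by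
    refine (hS.integrable_L (y + h)).congr ?_
    filter_upwards [Lp.coeFn_add y h] with x hx
    rw [hx]; simp
  have heq : (∫ x, L x ((y + h) x) ∂μ) = ∫ x, L x (y x + h x) ∂μ := by
    refine integral_congr_ae ?_
    filter_upwards [Lp.coeFn_add y h] with x hx
    rw [hx]; simp
  rw [heq, D1_apply]
  have e2 : ∫ x, (L x (y x + h x) - L x (y x)) ∂μ =
      (∫ x, L x (y x + h x) ∂μ) - ∫ x, L x (y x) ∂μ :=
    integral_sub hint1 (hS.integrable_L y)
  have e1 : ∫ x, (L x (y x + h x) - L x (y x) - fderiv ℝ (L x) (y x) (h x)) ∂μ =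
      (∫ x, (L x (y x + h x) - L x (y x)) ∂μ) - ∫ x, fderiv ℝ (L x) (y x) (h x) ∂μ :=
    integral_sub (hint1.sub (hS.integrable_L y)) (hS.integrable_g y h)
  rw [← e2, ← e1]
  have hb : ∀ᵐ x ∂μ, |L x (y x + h x) - L x (y x) - fderiv ℝ (L x) (y x) (h x)| ≤
      CB C K r * (‖h‖ * ‖h‖) := by
    filter_upwards [hS.good r hr0, ae_norm_le_norm y, ae_norm_le_norm h] with x hpt hyx hhx
    have h1 : ‖y x‖ ≤ r := hyx.trans (by linarith [norm_nonneg h])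
    have h2 : ‖y x + h x‖ ≤ r :=
      (norm_add_le _ _).trans (by linarith [add_le_add hyx hhx])
    have ht := hpt.taylor1 h1 h2
    rw [Real.norm_eq_abs] at ht
    refine ht.trans ?_
    have hcb : (0:ℝ) ≤ C + K r * r := by
      have := hS.hC; have := hS.hK r hr0; positivity
    calc (C + K r * r) * ‖h x‖ * ‖h x‖ = (C + K r * r) * (‖h x‖ * ‖h x‖) := by ring
      _ ≤ (C + K r * r) * (‖h‖ * ‖h‖) := mul_le_mul_of_nonneg_left
          (mul_le_mul hhx hhx (norm_nonneg _) (norm_nonneg h)) hcb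
      _ = CB C K r * (‖h‖ * ‖h‖) := rfl
  calc |∫ x, (L x (y x + h x) - L x (y x) - fderiv ℝ (L x) (y x) (h x)) ∂μ|
      ≤ CB C K r * (‖h‖ * ‖h‖) * (μ univ).toReal := abs_integral_le_const hb
    _ = CB C K r * (μ univ).toReal * (‖h‖ * ‖h‖) := by ring

lemma taylor2_integral (y h z : Lp V ⊤ μ) {r : ℝ} (hr : ‖y‖ + ‖h‖ ≤ r) :
    |D1 hS (y + h) z - D1 hS y z - D2 hS y h z| ≤
      K r * (μ univ).toReal * (‖h‖ * ‖h‖) * ‖z‖ := by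
  have hr0 : 0 ≤ r := le_trans (by positivity) hr
  have hint1 : Integrable (fun x => fderiv ℝ (L x) (y x + h x) (z x)) μ := by
    refine (hS.integrable_g (y + h) z).congr ?_
    filter_upwards [Lp.coeFn_add y h] with x hx
    rw [hx]; simp
  have heq : D1 hS (y + h) z = ∫ x, fderiv ℝ (L x) (y x + h x) (z x) ∂μ := by
    rw [D1_apply]
    refine integral_congr_ae ?_
    filter_upwards [Lp.coeFn_add y h] with x hx
    rw [hx]; simp
  rw [heq, D1_apply, D2_apply]
  have e2 : ∫ x, (fderiv ℝ (L x) (y x + h x) (z x) - fderiv ℝ (L x) (y x) (z x)) ∂μ =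
      (∫ x, fderiv ℝ (L x) (y x + h x) (z x) ∂μ) - ∫ x, fderiv ℝ (L x) (y x) (z x) ∂μ :=
    integral_sub hint1 (hS.integrable_g y z)
  have e1 : ∫ x, (fderiv ℝ (L x) (y x + h x) (z x) - fderiv ℝ (L x) (y x) (z x)
        - fderiv ℝ (fderiv ℝ (L x)) (y x) (h x) (z x)) ∂μ =
      (∫ x, (fderiv ℝ (L x) (y x + h x) (z x) - fderiv ℝ (L x) (y x) (z x)) ∂μ)
        - ∫ x, fderiv ℝ (fderiv ℝ (L x)) (y x) (h x) (z x) ∂μ :=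
    integral_sub (hint1.sub (hS.integrable_g y z)) (hS.integrable_B y h z)
  rw [← e2, ← e1]
  have hb : ∀ᵐ x ∂μ, |fderiv ℝ (L x) (y x + h x) (z x) - fderiv ℝ (L x) (y x) (z x)
      - fderiv ℝ (fderiv ℝ (L x)) (y x) (h x) (z x)| ≤ K r * (‖h‖ * ‖h‖) * ‖z‖ := by
    filter_upwards [hS.good r hr0, ae_norm_le_norm y, ae_norm_le_norm h, ae_norm_le_norm z]
      with x hpt hyx hhx hzx
    have h1 : ‖y x‖ ≤ r := hyx.trans (by linarith [norm_nonneg h])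
    have h2 : ‖y x + h x‖ ≤ r :=
      (norm_add_le _ _).trans (by linarith [add_le_add hyx hhx])
    have ht := hpt.taylor2 h1 h2
    have happ : |fderiv ℝ (L x) (y x + h x) (z x) - fderiv ℝ (L x) (y x) (z x)
        - fderiv ℝ (fderiv ℝ (L x)) (y x) (h x) (z x)| ≤
        ‖fderiv ℝ (L x) (y x + h x) - fderiv ℝ (L x) (y x)
          - fderiv ℝ (fderiv ℝ (L x)) (y x) (h x)‖ * ‖z x‖ := by
      have := (fderiv ℝ (L x) (y x + h x) - fderiv ℝ (L x) (y x)
        - fderiv ℝ (fderiv ℝ (L x)) (y x) (h x)).le_opNorm (z x)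
      simpa using this
    refine happ.trans ?_
    have hk := hS.hK r hr0
    calc ‖fderiv ℝ (L x) (y x + h x) - fderiv ℝ (L x) (y x)
          - fderiv ℝ (fderiv ℝ (L x)) (y x) (h x)‖ * ‖z x‖
        ≤ (K r * ‖h x‖ * ‖h x‖) * ‖z x‖ :=
          mul_le_mul_of_nonneg_right ht (norm_nonneg _)
      _ = K r * (‖h x‖ * ‖h x‖ * ‖z x‖) := by ring
      _ ≤ K r * (‖h‖ * ‖h‖ * ‖z‖) := mul_le_mul_of_nonneg_left
          (mul_le_mul (mul_le_mul hhx hhx (norm_nonneg _) (norm_nonneg h)) hzx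
            (norm_nonneg _) (by positivity)) hk
      _ = K r * (‖h‖ * ‖h‖) * ‖z‖ := by ring
  calc |∫ x, (fderiv ℝ (L x) (y x + h x) (z x) - fderiv ℝ (L x) (y x) (z x)
        - fderiv ℝ (fderiv ℝ (L x)) (y x) (h x) (z x)) ∂μ|
      ≤ K r * (‖h‖ * ‖h‖) * ‖z‖ * (μ univ).toReal := abs_integral_le_const hb
    _ = K r * (μ univ).toReal * (‖h‖ * ‖h‖) * ‖z‖ := by ring

lemma hasFDerivAt_I (y : Lp V ⊤ μ) :
    HasFDerivAt (fun y : Lp V ⊤ μ => ∫ x, L x (y x) ∂μ) (D1 hS y) y := by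
  rw [hasFDerivAt_iff_isLittleO_nhds_zero]
  have h1 : (fun h : Lp V ⊤ μ => (∫ x, L x ((y + h) x) ∂μ) - (∫ x, L x (y x) ∂μ)
      - D1 hS y h) =O[𝓝 0] fun h => ‖h‖ * ‖h‖ := by
    rw [Asymptotics.isBigO_iff]
    refine ⟨CB C K (‖y‖ + 1) * (μ univ).toReal, ?_⟩
    have hev : ∀ᶠ h : Lp V ⊤ μ in 𝓝 0, ‖h‖ ≤ 1 := by
      have hmem := Metric.closedBall_mem_nhds (0 : Lp V ⊤ μ) one_pos
      exact eventually_of_mem hmem fun h hh => by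
        simpa [dist_eq_norm] using hh
    filter_upwards [hev] with h hh
    rw [Real.norm_eq_abs]
    have ht := hS.taylor1_integral y h (r := ‖y‖ + 1) (by linarith)
    refine ht.trans ?_
    rw [Real.norm_eq_abs, abs_of_nonneg (by positivity)]
  have h2 : (fun h : Lp V ⊤ μ => ‖h‖ * ‖h‖) =o[𝓝 0] fun h => h := by
    rw [Asymptotics.isLittleO_iff]
    intro c hc
    have hev : ∀ᶠ h : Lp V ⊤ μ in 𝓝 0, ‖h‖ ≤ c := by
      have hmem := Metric.closedBall_mem_nhds (0 : Lp V ⊤ μ) hc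
      exact eventually_of_mem hmem fun h hh => by
        simpa [dist_eq_norm] using hh
    filter_upwards [hev] with h hh
    rw [Real.norm_eq_abs, abs_of_nonneg (by positivity)]
    exact mul_le_mul_of_nonneg_right hh (norm_nonneg h)
  exact h1.trans_isLittleO h2

lemma hasFDerivAt_D1 (y : Lp V ⊤ μ) :
    HasFDerivAt (fun y : Lp V ⊤ μ => D1 hS y) (D2 hS y) y := by
  rw [hasFDerivAt_iff_isLittleO_nhds_zero]
  have h1 : (fun h : Lp V ⊤ μ => D1 hS (y + h) - D1 hS y - D2 hS y h)
      =O[𝓝 0] fun h => ‖h‖ * ‖h‖ := by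
    rw [Asymptotics.isBigO_iff]
    refine ⟨K (‖y‖ + 1) * (μ univ).toReal, ?_⟩
    have hev : ∀ᶠ h : Lp V ⊤ μ in 𝓝 0, ‖h‖ ≤ 1 := by
      have hmem := Metric.closedBall_mem_nhds (0 : Lp V ⊤ μ) one_pos
      exact eventually_of_mem hmem fun h hh => by
        simpa [dist_eq_norm] using hh
    filter_upwards [hev] with h hh
    have hr0 : (0:ℝ) ≤ ‖y‖ + 1 := by positivity
    have hK0 := hS.hK _ hr0
    have hb : ‖D1 hS (y + h) - D1 hS y - D2 hS y h‖ ≤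
        K (‖y‖ + 1) * (μ univ).toReal * (‖h‖ * ‖h‖) := by
      refine ContinuousLinearMap.opNorm_le_bound _
        (mul_nonneg (mul_nonneg hK0 ENNReal.toReal_nonneg)
          (mul_nonneg (norm_nonneg h) (norm_nonneg h))) fun z => ?_
      have hz1 : (D1 hS (y + h) - D1 hS y - D2 hS y h) z =
          D1 hS (y + h) z - D1 hS y z - D2 hS y h z := by simp
      rw [hz1, Real.norm_eq_abs]
      exact hS.taylor2_integral y h z (r := ‖y‖ + 1) (by linarith)
    refine hb.trans (le_of_eq ?_)
    rw [Real.norm_eq_abs, abs_of_nonneg (mul_nonneg (norm_nonneg h) (norm_nonneg h))]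
  have h2 : (fun h : Lp V ⊤ μ => ‖h‖ * ‖h‖) =o[𝓝 0] fun h => h := by
    rw [Asymptotics.isLittleO_iff]
    intro c hc
    have hev : ∀ᶠ h : Lp V ⊤ μ in 𝓝 0, ‖h‖ ≤ c := by
      have hmem := Metric.closedBall_mem_nhds (0 : Lp V ⊤ μ) hc
      exact eventually_of_mem hmem fun h hh => by
        simpa [dist_eq_norm] using hh
    filter_upwards [hev] with h hh
    rw [Real.norm_eq_abs, abs_of_nonneg (by positivity)]
    exact mul_le_mul_of_nonneg_right hh (norm_nonneg h)
  exact h1.trans_isLittleO h2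

lemma D2_sub_norm_le (y yh : Lp V ⊤ μ) {r : ℝ} (hy : ‖y‖ ≤ r) (hyh : ‖yh‖ ≤ r) :
    ‖D2 hS y - D2 hS yh‖ ≤ K r * (μ univ).toReal * ‖y - yh‖ := by
  have hr0 : 0 ≤ r := (norm_nonneg y).trans hy
  have hK0 := hS.hK r hr0
  have hnn : (0:ℝ) ≤ K r * (μ univ).toReal * ‖y - yh‖ :=
    mul_nonneg (mul_nonneg hK0 ENNReal.toReal_nonneg) (norm_nonneg _)
  refine ContinuousLinearMap.opNorm_le_bound _ hnn fun z => ?_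
  refine ContinuousLinearMap.opNorm_le_bound _ (mul_nonneg hnn (norm_nonneg z)) fun w => ?_
  have happ : (D2 hS y - D2 hS yh) z w = ∫ x,
      (fderiv ℝ (fderiv ℝ (L x)) (y x) - fderiv ℝ (fderiv ℝ (L x)) (yh x)) (z x) (w x) ∂μ := by
    simp only [ContinuousLinearMap.sub_apply]
    rw [D2_apply, D2_apply, ← integral_sub (hS.integrable_B y z w) (hS.integrable_B yh z w)]
  rw [happ, Real.norm_eq_abs]
  have hb : ∀ᵐ x ∂μ, |(fderiv ℝ (fderiv ℝ (L x)) (y x)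
      - fderiv ℝ (fderiv ℝ (L x)) (yh x)) (z x) (w x)| ≤
      K r * ‖y - yh‖ * (‖z‖ * ‖w‖) := by
    filter_upwards [hS.good r hr0, ae_norm_le_norm y, ae_norm_le_norm yh,
      hS.ae_sub_norm_le y yh, ae_norm_le_norm z, ae_norm_le_norm w]
      with x hpt h1 h2 h3 h4 h5
    have hlip := hpt.B_lip (h2.trans hyh) (h1.trans hy)
    calc |(fderiv ℝ (fderiv ℝ (L x)) (y x) - fderiv ℝ (fderiv ℝ (L x)) (yh x)) (z x) (w x)|
        ≤ ‖(fderiv ℝ (fderiv ℝ (L x)) (y x) - fderiv ℝ (fderiv ℝ (L x)) (yh x)) (z x)‖ * ‖w x‖ := by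
          have := ((fderiv ℝ (fderiv ℝ (L x)) (y x)
            - fderiv ℝ (fderiv ℝ (L x)) (yh x)) (z x)).le_opNorm (w x)
          simpa using this
      _ ≤ ‖fderiv ℝ (fderiv ℝ (L x)) (y x) - fderiv ℝ (fderiv ℝ (L x)) (yh x)‖ * ‖z x‖ * ‖w x‖ :=
          mul_le_mul_of_nonneg_right ((fderiv ℝ (fderiv ℝ (L x)) (y x)
            - fderiv ℝ (fderiv ℝ (L x)) (yh x)).le_opNorm (z x)) (norm_nonneg _)
      _ ≤ K r * ‖y x - yh x‖ * ‖z x‖ * ‖w x‖ :=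
          mul_le_mul_of_nonneg_right
            (mul_le_mul_of_nonneg_right hlip (norm_nonneg _)) (norm_nonneg _)
      _ ≤ K r * ‖y - yh‖ * (‖z‖ * ‖w‖) := by
          have m1 : K r * ‖y x - yh x‖ ≤ K r * ‖y - yh‖ :=
            mul_le_mul_of_nonneg_left h3 hK0
          have m2 : K r * ‖y x - yh x‖ * ‖z x‖ ≤ K r * ‖y - yh‖ * ‖z‖ :=
            mul_le_mul m1 h4 (norm_nonneg _) (mul_nonneg hK0 (norm_nonneg _))
          have m3 : K r * ‖y x - yh x‖ * ‖z x‖ * ‖w x‖ ≤ K r * ‖y - yh‖ * ‖z‖ * ‖w‖ :=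
            mul_le_mul m2 h5 (norm_nonneg _)
              (mul_nonneg (mul_nonneg hK0 (norm_nonneg _)) (norm_nonneg _))
          calc K r * ‖y x - yh x‖ * ‖z x‖ * ‖w x‖ ≤ K r * ‖y - yh‖ * ‖z‖ * ‖w‖ := m3
            _ = K r * ‖y - yh‖ * (‖z‖ * ‖w‖) := by ring
  calc |∫ x, (fderiv ℝ (fderiv ℝ (L x)) (y x)
        - fderiv ℝ (fderiv ℝ (L x)) (yh x)) (z x) (w x) ∂μ|
      ≤ K r * ‖y - yh‖ * (‖z‖ * ‖w‖) * (μ univ).toReal := abs_integral_le_const hb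
    _ = K r * (μ univ).toReal * ‖y - yh‖ * ‖z‖ * ‖w‖ := by ring

end Setup

end Main2


section Main3

variable {α : Type*} [MeasurableSpace α] {μ : Measure α} [IsFiniteMeasure μ]
variable {V : Type*} [NormedAddCommGroup V] [NormedSpace ℝ V] [MeasurableSpace V]
  [BorelSpace V] [SecondCountableTopology V]
variable {L : α → V → ℝ} {C : ℝ} {K : ℝ → ℝ}

namespace Setup

variable (hS : Setup μ L C K)
include hS

lemma continuous_D2 : Continuous (fun y : Lp V ⊤ μ => D2 hS y) := by
  rw [continuous_iff_continuousAt]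
  intro y₀
  refine continuousAt_of_locally_lipschitz (f := fun y : Lp V ⊤ μ => D2 hS y) (x := y₀)
    (r := 1) (show (0:ℝ) < 1 by norm_num) (K (‖y₀‖ + 1) * (μ univ).toReal) fun y hy => ?_
  rw [dist_eq_norm] at hy ⊢
  have h1 : ‖y‖ ≤ ‖y₀‖ + 1 := by
    calc ‖y‖ = ‖y₀ + (y - y₀)‖ := by congr 1; abel
      _ ≤ ‖y₀‖ + ‖y - y₀‖ := norm_add_le _ _
      _ ≤ ‖y₀‖ + 1 := by linarith
  rw [← dist_eq_norm, dist_eq_norm]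
  exact (dist_eq_norm (D2 hS y) (D2 hS y₀)).trans_le
    (hS.D2_sub_norm_le y y₀ h1 (by linarith [norm_nonneg y₀]))

lemma fderiv_I (y : Lp V ⊤ μ) :
    fderiv ℝ (fun y : Lp V ⊤ μ => ∫ x, L x (y x) ∂μ) y = D1 hS y :=
  (hS.hasFDerivAt_I y).fderiv

lemma fderiv2_I (y : Lp V ⊤ μ) :
    fderiv ℝ (fderiv ℝ (fun y : Lp V ⊤ μ => ∫ x, L x (y x) ∂μ)) y = D2 hS y := by
  have h : fderiv ℝ (fun y : Lp V ⊤ μ => ∫ x, L x (y x) ∂μ) = fun y => D1 hS y :=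
    funext fun y => hS.fderiv_I y
  rw [h]
  exact (hS.hasFDerivAt_D1 y).fderiv

lemma iterated2_I (y z w : Lp V ⊤ μ) :
    iteratedFDeriv ℝ 2 (fun y : Lp V ⊤ μ => ∫ x, L x (y x) ∂μ) y ![z, w] =
      D2 hS y z w := by
  rw [iteratedFDeriv_two_apply, hS.fderiv2_I]
  simp

lemma contDiff_I : ContDiff ℝ 2 (fun y : Lp V ⊤ μ => ∫ x, L x (y x) ∂μ) := by
  rw [show (2 : WithTop ℕ∞) = 1 + 1 from rfl, contDiff_succ_iff_fderiv]
  refine ⟨fun y => (hS.hasFDerivAt_I y).differentiableAt, by simp, ?_⟩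
  have h : fderiv ℝ (fun y : Lp V ⊤ μ => ∫ x, L x (y x) ∂μ) = fun y => D1 hS y :=
    funext fun y => hS.fderiv_I y
  rw [h, contDiff_one_iff_fderiv]
  have h2 : fderiv ℝ (fun y : Lp V ⊤ μ => D1 hS y) = fun y => D2 hS y :=
    funext fun y => (hS.hasFDerivAt_D1 y).fderiv
  exact ⟨fun y => (hS.hasFDerivAt_D1 y).differentiableAt, h2 ▸ hS.continuous_D2⟩

lemma F1 (y z : Lp V ⊤ μ) {r : ℝ} (hy : ‖y‖ ≤ r) :
    |D1 hS y z| ≤ Cg C K r * (μ univ).toReal ^ ((1:ℝ)/2) * (eLpNorm (⇑z) 2 μ).toReal := by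
  rw [D1_apply]
  exact abs_integral_le_CS1 (hS.Cg_nonneg ((norm_nonneg y).trans hy)) z
    (hS.aesm_g y z) (hS.ae_g_bound y z hy)

lemma F2 (y z w : Lp V ⊤ μ) {r : ℝ} (hy : ‖y‖ ≤ r) :
    |D2 hS y z w| ≤ CB C K r * (eLpNorm (⇑z) 2 μ).toReal * (eLpNorm (⇑w) 2 μ).toReal := by
  rw [D2_apply]
  exact abs_integral_le_CS2 (hS.CB_nonneg ((norm_nonneg y).trans hy)) z w
    (hS.aesm_B y z w) (hS.ae_B_bound y z w hy)

lemma F3 (y yh z : Lp V ⊤ μ) {r : ℝ} (hy : ‖y‖ ≤ r) (hyh : ‖yh‖ ≤ r) :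
    |D1 hS y z - D1 hS yh z| ≤
      CB C K r * ‖y - yh‖ * (μ univ).toReal ^ ((1:ℝ)/2) * (eLpNorm (⇑z) 2 μ).toReal := by
  have hr0 : 0 ≤ r := (norm_nonneg y).trans hy
  have heq : D1 hS y z - D1 hS yh z =
      ∫ x, (fderiv ℝ (L x) (y x) (z x) - fderiv ℝ (L x) (yh x) (z x)) ∂μ := by
    rw [D1_apply, D1_apply, integral_sub (hS.integrable_g y z) (hS.integrable_g yh z)]
  rw [heq]
  have h := abs_integral_le_CS1 (c := CB C K r * ‖y - yh‖)
    (mul_nonneg (hS.CB_nonneg hr0) (norm_nonneg _)) z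
    ((hS.aesm_g y z).sub (hS.aesm_g yh z)) ?_
  · refine h.trans (le_of_eq (by ring))
  · filter_upwards [hS.good r hr0, ae_norm_le_norm y, ae_norm_le_norm yh,
      hS.ae_sub_norm_le y yh] with x hpt h1 h2 h3
    have hlip := hpt.g_lip (h2.trans hyh) (h1.trans hy)
    calc |fderiv ℝ (L x) (y x) (z x) - fderiv ℝ (L x) (yh x) (z x)|
        ≤ ‖fderiv ℝ (L x) (y x) - fderiv ℝ (L x) (yh x)‖ * ‖z x‖ := by
          have := (fderiv ℝ (L x) (y x) - fderiv ℝ (L x) (yh x)).le_opNorm (z x)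
          simpa using this
      _ ≤ (C + K r * r) * ‖y x - yh x‖ * ‖z x‖ :=
          mul_le_mul_of_nonneg_right hlip (norm_nonneg _)
      _ ≤ CB C K r * ‖y - yh‖ * ‖z x‖ := by
          refine mul_le_mul_of_nonneg_right ?_ (norm_nonneg _)
          exact mul_le_mul_of_nonneg_left h3 (hS.CB_nonneg hr0)

lemma F4 (y yh z w : Lp V ⊤ μ) {r : ℝ} (hy : ‖y‖ ≤ r) (hyh : ‖yh‖ ≤ r) :
    |D2 hS y z w - D2 hS yh z w| ≤
      K r * ‖y - yh‖ * (eLpNorm (⇑z) 2 μ).toReal * (eLpNorm (⇑w) 2 μ).toReal := by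
  have hr0 : 0 ≤ r := (norm_nonneg y).trans hy
  have hK0 := hS.hK r hr0
  have heq : D2 hS y z w - D2 hS yh z w =
      ∫ x, (fderiv ℝ (fderiv ℝ (L x)) (y x) (z x) (w x)
        - fderiv ℝ (fderiv ℝ (L x)) (yh x) (z x) (w x)) ∂μ := by
    rw [D2_apply, D2_apply, integral_sub (hS.integrable_B y z w) (hS.integrable_B yh z w)]
  rw [heq]
  have h := abs_integral_le_CS2 (c := K r * ‖y - yh‖)
    (mul_nonneg hK0 (norm_nonneg _)) z w
    ((hS.aesm_B y z w).sub (hS.aesm_B yh z w)) ?_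
  · refine h.trans (le_of_eq (by ring))
  · filter_upwards [hS.good r hr0, ae_norm_le_norm y, ae_norm_le_norm yh,
      hS.ae_sub_norm_le y yh] with x hpt h1 h2 h3
    have hlip := hpt.B_lip (h2.trans hyh) (h1.trans hy)
    calc |fderiv ℝ (fderiv ℝ (L x)) (y x) (z x) (w x)
          - fderiv ℝ (fderiv ℝ (L x)) (yh x) (z x) (w x)|
        ≤ ‖(fderiv ℝ (fderiv ℝ (L x)) (y x) - fderiv ℝ (fderiv ℝ (L x)) (yh x)) (z x)‖
            * ‖w x‖ := by
          have := ((fderiv ℝ (fderiv ℝ (L x)) (y x)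
            - fderiv ℝ (fderiv ℝ (L x)) (yh x)) (z x)).le_opNorm (w x)
          simpa using this
      _ ≤ ‖fderiv ℝ (fderiv ℝ (L x)) (y x) - fderiv ℝ (fderiv ℝ (L x)) (yh x)‖
            * ‖z x‖ * ‖w x‖ :=
          mul_le_mul_of_nonneg_right
            ((fderiv ℝ (fderiv ℝ (L x)) (y x)
              - fderiv ℝ (fderiv ℝ (L x)) (yh x)).le_opNorm (z x)) (norm_nonneg _)
      _ ≤ K r * ‖y x - yh x‖ * ‖z x‖ * ‖w x‖ :=
          mul_le_mul_of_nonneg_right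
            (mul_le_mul_of_nonneg_right hlip (norm_nonneg _)) (norm_nonneg _)
      _ ≤ K r * ‖y - yh‖ * (‖z x‖ * ‖w x‖) := by
          have m1 : K r * ‖y x - yh x‖ ≤ K r * ‖y - yh‖ :=
            mul_le_mul_of_nonneg_left h3 hK0
          calc K r * ‖y x - yh x‖ * ‖z x‖ * ‖w x‖
              ≤ K r * ‖y - yh‖ * ‖z x‖ * ‖w x‖ := by
                refine mul_le_mul_of_nonneg_right
                  (mul_le_mul_of_nonneg_right m1 (norm_nonneg _)) (norm_nonneg _)
            _ = K r * ‖y - yh‖ * (‖z x‖ * ‖w x‖) := by ring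

end Setup

end Main3

end IFhelp

open MeasureTheory

noncomputable section

/-- The integral functional `I(y) = ∫_E ℓ(x, y(x)) dx` on `L^∞(E, ℝᵐ)`. -/
def integralFunctional (n m : ℕ) (E : Set (Fin n → ℝ))
    (L : (Fin n → ℝ) → EuclideanSpace ℝ (Fin m) → ℝ)
    (y : Lp (EuclideanSpace ℝ (Fin m)) ⊤ (volume.restrict E)) : ℝ :=
  ∫ x, L x (y x) ∂(volume.restrict E)

/-- Under the boundedness and Lipschitz conditions of order 2 (in the
vector variable), the integral functional `I(y) = ∫_E ℓ(x,y(x)) dx` is twice continuously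
Fréchet differentiable on `L^∞(E,ℝᵐ)`, and on each `L^∞`-ball its first and second
derivatives are `L²`-continuous and `L^∞`-Lipschitz in `y` for the `L²` operator norms. -/
theorem integral_functional_C2_with_L2_bounds
    (n m : ℕ) (E : Set (Fin n → ℝ)) (hE : MeasurableSet E)
    (hEfin : volume E < ⊤)
    (L : (Fin n → ℝ) → EuclideanSpace ℝ (Fin m) → ℝ)
    (hmeas : Measurable (Function.uncurry L))
    (hsmooth : ∀ᵐ x ∂(volume.restrict E), ContDiff ℝ 2 (L x))
    (hbound : ∃ C > (0 : ℝ), ∀ᵐ x ∂(volume.restrict E),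
      |L x 0| ≤ C ∧ ‖fderiv ℝ (L x) 0‖ ≤ C ∧ ‖iteratedFDeriv ℝ 2 (L x) 0‖ ≤ C)
    (hlip : ∀ M ≥ (0 : ℝ), ∃ K ≥ (0 : ℝ), ∀ᵐ x ∂(volume.restrict E),
      ∀ y₁ y₂ : EuclideanSpace ℝ (Fin m), ‖y₁‖ ≤ M → ‖y₂‖ ≤ M →
        ‖iteratedFDeriv ℝ 2 (L x) y₂ - iteratedFDeriv ℝ 2 (L x) y₁‖ ≤ K * ‖y₂ - y₁‖) :
    ContDiff ℝ 2 (integralFunctional n m E L) ∧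
    ∀ M ≥ (0 : ℝ), ∃ Ca > (0 : ℝ), ∃ Cb > (0 : ℝ),
      ∀ y yh : Lp (EuclideanSpace ℝ (Fin m)) ⊤ (volume.restrict E),
        ‖y‖ ≤ M → ‖yh‖ ≤ M →
        ∀ z zh : Lp (EuclideanSpace ℝ (Fin m)) ⊤ (volume.restrict E),
          |fderiv ℝ (integralFunctional n m E L) y z| ≤
            Ca * (eLpNorm (⇑z) 2 (volume.restrict E)).toReal ∧
          |iteratedFDeriv ℝ 2 (integralFunctional n m E L) y ![z, zh]| ≤
            Ca * (eLpNorm (⇑z) 2 (volume.restrict E)).toReal *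
              (eLpNorm (⇑zh) 2 (volume.restrict E)).toReal ∧
          |fderiv ℝ (integralFunctional n m E L) y z -
              fderiv ℝ (integralFunctional n m E L) yh z| ≤
            Cb * ‖y - yh‖ * (eLpNorm (⇑z) 2 (volume.restrict E)).toReal ∧
          |iteratedFDeriv ℝ 2 (integralFunctional n m E L) y ![z, zh] -
              iteratedFDeriv ℝ 2 (integralFunctional n m E L) yh ![z, zh]| ≤
            Cb * ‖y - yh‖ * (eLpNorm (⇑z) 2 (volume.restrict E)).toReal *
              (eLpNorm (⇑zh) 2 (volume.restrict E)).toReal := by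
  classical
  set μ : Measure (Fin n → ℝ) := volume.restrict E with hμ
  haveI : IsFiniteMeasure μ := ⟨by rwa [hμ, Measure.restrict_apply_univ]⟩
  obtain ⟨C, hCpos, hCae⟩ := hbound
  choose Kf hKf using hlip
  set K' : ℝ → ℝ := fun r => if hr : 0 ≤ r then Kf r hr else 0 with hK'
  have hK'eq : ∀ r (hr : 0 ≤ r), K' r = Kf r hr := fun r hr => by
    simp only [hK', dif_pos hr]
  have hS : IFhelp.Setup μ L C K' := by
    refine ⟨hmeas, ?_, hCpos.le, ?_⟩
    · intro r hr
      rw [hK'eq r hr]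
      filter_upwards [hsmooth, hCae, (hKf r hr).2] with x h1 h2 h3
      exact ⟨h1, h2.1, h2.2.1, h2.2.2, fun v₁ v₂ a b => h3 v₁ v₂ a b,
        hCpos.le, (hKf r hr).1, hr⟩
    · intro r hr
      rw [hK'eq r hr]
      exact (hKf r hr).1
  have hIdef : integralFunctional n m E L =
      fun y : Lp (EuclideanSpace ℝ (Fin m)) ⊤ μ => ∫ x, L x (y x) ∂μ := rfl
  constructor
  · rw [hIdef]
    exact hS.contDiff_I
  · intro M hM
    set μT : ℝ := (μ Set.univ).toReal with hμT
    have hμT0 : 0 ≤ μT := ENNReal.toReal_nonneg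
    have hsq0 : 0 ≤ μT ^ ((1:ℝ)/2) := Real.rpow_nonneg hμT0 _
    have hCg0 : 0 ≤ IFhelp.Cg C K' M := hS.Cg_nonneg hM
    have hCB0 : 0 ≤ IFhelp.CB C K' M := hS.CB_nonneg hM
    have hK0 : 0 ≤ K' M := hS.hK M hM
    set Ca := max (IFhelp.Cg C K' M * μT ^ ((1:ℝ)/2)) (IFhelp.CB C K' M) + 1 with hCa
    set Cb := max (IFhelp.CB C K' M * μT ^ ((1:ℝ)/2)) (K' M) + 1 with hCb
    have hCa1 : IFhelp.Cg C K' M * μT ^ ((1:ℝ)/2) ≤ Ca := by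
      rw [hCa]
      exact (le_max_left _ _).trans (le_add_of_nonneg_right zero_le_one)
    have hCa2 : IFhelp.CB C K' M ≤ Ca := by
      rw [hCa]
      exact (le_max_right _ _).trans (le_add_of_nonneg_right zero_le_one)
    have hCb1 : IFhelp.CB C K' M * μT ^ ((1:ℝ)/2) ≤ Cb := by
      rw [hCb]
      exact (le_max_left _ _).trans (le_add_of_nonneg_right zero_le_one)
    have hCb2 : K' M ≤ Cb := by
      rw [hCb]
      exact (le_max_right _ _).trans (le_add_of_nonneg_right zero_le_one)
    have hCapos : 0 < Ca := by
      rw [hCa]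
      have h0 : (0:ℝ) ≤ max (IFhelp.Cg C K' M * μT ^ ((1:ℝ)/2)) (IFhelp.CB C K' M) :=
        le_trans hCB0 (le_max_right _ _)
      linarith
    have hCbpos : 0 < Cb := by
      rw [hCb]
      have h0 : (0:ℝ) ≤ max (IFhelp.CB C K' M * μT ^ ((1:ℝ)/2)) (K' M) :=
        le_trans hK0 (le_max_right _ _)
      linarith
    refine ⟨Ca, hCapos, Cb, hCbpos, ?_⟩
    intro y yh hy hyh z zh
    have hz0 : 0 ≤ (eLpNorm (⇑z) 2 μ).toReal := ENNReal.toReal_nonneg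
    have hzh0 : 0 ≤ (eLpNorm (⇑zh) 2 μ).toReal := ENNReal.toReal_nonneg
    rw [hIdef]
    refine ⟨?_, ?_, ?_, ?_⟩
    · rw [hS.fderiv_I]
      refine (hS.F1 y z hy).trans ?_
      exact mul_le_mul_of_nonneg_right hCa1 hz0
    · rw [hS.iterated2_I]
      refine (hS.F2 y z zh hy).trans ?_
      exact mul_le_mul_of_nonneg_right (mul_le_mul_of_nonneg_right hCa2 hz0) hzh0
    · rw [hS.fderiv_I, hS.fderiv_I]
      refine (hS.F3 y yh z hy hyh).trans ?_
      calc IFhelp.CB C K' M * ‖y - yh‖ * μT ^ ((1:ℝ)/2) * (eLpNorm (⇑z) 2 μ).toReal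
          = (IFhelp.CB C K' M * μT ^ ((1:ℝ)/2)) * ‖y - yh‖ * (eLpNorm (⇑z) 2 μ).toReal := by
            ring
        _ ≤ Cb * ‖y - yh‖ * (eLpNorm (⇑z) 2 μ).toReal :=
            mul_le_mul_of_nonneg_right
              (mul_le_mul_of_nonneg_right hCb1 (norm_nonneg _)) hz0
    · rw [hS.iterated2_I, hS.iterated2_I]
      refine (hS.F4 y yh z zh hy hyh).trans ?_
      exact mul_le_mul_of_nonneg_right (mul_le_mul_of_nonneg_right
        (mul_le_mul_of_nonneg_right hCb2 (norm_nonneg _)) hz0) hzh0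

end
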